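/- arXiv:2203.15494 — 4 statements merged into one kernel-verified Lean document; each statement's English description precedes it below -/
import Mathlib

section
/- Let 1 ≤ i < j ≤ m−1 and n ≥ 1. Then α_i ≱_PS α_j; that is, there exists a profile of n preferences over m candidates at which the j-approval rule α_j is manipulable but the i-approval rule α_i is not manipulable. -/
/-- A preference order on `m` candidates: `σ c` is the position of candidate `c`
(position `0` is the most preferred). `σ c < σ d` means `c` is strictly preferred to `d`. -/
abbrev Pref (m : ℕ) := Fin m ≃ Fin m

/-- A voting rule for `n` voters and `m` candidates. -/
abbrev Rule (m n : ℕ) := (Fin n → Pref m) → Fin m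

/-- Total score of candidate `c` under score vector `s` (indexed by position) at profile `P`. -/
def score {m n : ℕ} (s : Fin m → ℕ) (P : Fin n → Pref m) (c : Fin m) : ℕ :=
  ∑ v, s (P v c)

/-- The scoring rule with score vector `s`: the winner is the candidate that is first in the
lexicographic tie-breaking order (i.e. has the least index) among those of maximal score. -/
def winner {m n : ℕ} [NeZero m] (s : Fin m → ℕ) (P : Fin n → Pref m) : Fin m :=
  (Finset.univ.filter fun c => ∀ d, score s P d ≤ score s P c).min' (by
    obtain ⟨c, -, hc⟩ := Finset.exists_max_image Finset.univ (score s P) Finset.univ_nonempty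
    exact ⟨c, Finset.mem_filter.mpr ⟨Finset.mem_univ c, fun d => hc d (Finset.mem_univ d)⟩⟩)

/-- `k`-approval, `α_k`: one point for each of the top `k` positions. -/
def approval (m n k : ℕ) [NeZero m] : Rule m n :=
  winner (fun r => if (r : ℕ) < k then 1 else 0)

/-- `k`-Borda, `β_k`: `max (0, k - r + 1)` points for (`1`-indexed) position `r`, i.e. `k - r`
(truncated subtraction) points for `0`-indexed position `r`. -/
def kBorda (m n k : ℕ) [NeZero m] : Rule m n :=
  winner (fun r => k - (r : ℕ))

/-- `f` is manipulable at profile `P`: some voter `v` can misreport some preference `Q` and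
obtain an outcome strictly preferred (by `v`'s true preferences) to the sincere outcome. -/
def Manipulable {m n : ℕ} (f : Rule m n) (P : Fin n → Pref m) : Prop :=
  ∃ (v : Fin n) (Q : Pref m), P v (f (Function.update P v Q)) < P v (f P)

/-- `f ≥_PS g` : every profile at which `g` is manipulable is one at which `f` is manipulable. -/
def MoreManip {m n : ℕ} (f g : Rule m n) : Prop :=
  ∀ P : Fin n → Pref m, Manipulable g P → Manipulable f P

/-!
Let every voter rank candidate `1` first and candidate `0` in position `j`, the last one approved
under `α_j`. Under `α_j` both are approved by everyone and the tie is broken in favour of `0`; a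
single voter who pushes `0` just below the approval threshold makes `1`, his favourite, win.
Under `α_i` with `i < j` candidate `0` is approved by nobody, so `1` wins outright; as it is
everyone's favourite, nobody can gain.
-/

open Finset

def approvalVector (m k : ℕ) (r : Fin m) : ℕ := if (r : ℕ) < k then 1 else 0

lemma approval_eq_winner (m n k : ℕ) [NeZero m] :
    approval m n k = winner (approvalVector m k) := rfl

section Score

variable {m n : ℕ} (k : ℕ) (P : Fin n → Pref m) (c : Fin m)

lemma score_approvalVector : score (approvalVector m k) P c = #{v | (P v c : ℕ) < k} := by
  simp only [score, approvalVector, card_filter]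

lemma score_approvalVector_le : score (approvalVector m k) P c ≤ n := by
  rw [score_approvalVector]
  exact (card_filter_le _ _).trans_eq (card_fin n)

variable {k P c}

lemma score_approvalVector_eq_of_forall (h : ∀ v, (P v c : ℕ) < k) :
    score (approvalVector m k) P c = n := by
  rw [score_approvalVector, filter_true_of_mem fun v _ => h v, card_univ, Fintype.card_fin]

lemma score_approvalVector_lt_of_exists (h : ∃ v, k ≤ (P v c : ℕ)) :
    score (approvalVector m k) P c < n := by
  obtain ⟨v, hv⟩ := h
  rw [score_approvalVector]
  exact (card_lt_card (filter_ssubset.mpr ⟨v, mem_univ v, hv.not_gt⟩)).trans_eq (card_fin n)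

end Score

lemma winner_eq_of_forall_lt {m n : ℕ} [NeZero m] {s : Fin m → ℕ} {P : Fin n → Pref m}
    {w : Fin m} (hmax : ∀ d, score s P d ≤ score s P w)
    (hmin : ∀ c < w, score s P c < score s P w) :
    winner s P = w := by
  refine le_antisymm (min'_le _ w (mem_filter.mpr ⟨mem_univ w, hmax⟩))
    (le_min' _ _ _ fun c hc => ?_)
  by_contra! hcw
  exact (hmin c hcw).not_ge ((mem_filter.mp hc).2 w)

lemma approval_eq_of_forall_approved {m n k : ℕ} [NeZero m] {P : Fin n → Pref m} {w : Fin m}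
    (hw : ∀ v, (P v w : ℕ) < k) (hlt : ∀ c < w, ∃ v, k ≤ (P v c : ℕ)) :
    approval m n k P = w := by
  rw [approval_eq_winner]
  refine winner_eq_of_forall_lt (fun d => ?_) (fun c hc => ?_) <;>
    rw [score_approvalVector_eq_of_forall hw]
  exacts [score_approvalVector_le k P d, score_approvalVector_lt_of_exists (hlt c hc)]

lemma not_manipulable_of_forall_le {m n : ℕ} {f : Rule m n} {P : Fin n → Pref m}
    (h : ∀ v c, P v (f P) ≤ P v c) : ¬ Manipulable f P := by
  rintro ⟨v, Q, hQ⟩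
  exact (h v _).not_gt hQ

lemma Equiv.exists_apply_eq_apply_eq {α : Type*} [DecidableEq α] {a b p q : α} (hab : a ≠ b)
    (hpq : p ≠ q) : ∃ σ : α ≃ α, σ a = p ∧ σ b = q := by
  set r := swap a p b
  have hrp : r ≠ p := fun h =>
    hab ((swap a p).injective (h.trans (swap_apply_left a p).symm)).symm
  refine ⟨(swap a p).trans (swap r q), ?_, ?_⟩
  · simp only [trans_apply, swap_apply_left]
    exact swap_apply_of_ne_of_ne hrp.symm hpq
  · simp only [trans_apply, swap_apply_left, r]

/-- For `1 ≤ i < j ≤ m-1` and `n ≥ 1`: `α_i ≱_PS α_j`. -/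
theorem stmt_0 (m n i j : ℕ) [NeZero m] (hi : 1 ≤ i) (hij : i < j) (hj : j ≤ m - 1)
    (hn : 1 ≤ n) :
    ∃ P : Fin n → Pref m,
      Manipulable (approval m n j) P ∧ ¬ Manipulable (approval m n i) P := by
  have hjm : j < m := by omega
  set c₀ : Fin m := ⟨0, by omega⟩
  set c₁ : Fin m := ⟨1, by omega⟩
  have hc₀₁ : c₀ ≠ c₁ := by simp [c₀, c₁, Fin.ext_iff]
  have eq_c₀_of_lt : ∀ c < c₁, c = c₀ := fun c hc =>
    Fin.ext (by simp [c₁, Fin.lt_def] at hc; simp [c₀, hc])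
  obtain ⟨σ, hσ₀, hσ₁⟩ := Equiv.exists_apply_eq_apply_eq (p := ⟨j - 1, by omega⟩)
    (q := ⟨0, by omega⟩) hc₀₁ (by simp [Fin.ext_iff]; omega)
  obtain ⟨τ, hτ₀, hτ₁⟩ := Equiv.exists_apply_eq_apply_eq (p := ⟨j, hjm⟩)
    (q := ⟨0, by omega⟩) hc₀₁ (by simp [Fin.ext_iff]; omega)
  let v₀ : Fin n := ⟨0, hn⟩
  have honest_j : approval m n j (fun _ => σ) = c₀ :=
    approval_eq_of_forall_approved (by simp [hσ₀]; omega)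
      (fun c hc => absurd hc (by simp [c₀]))
  have honest_i : approval m n i (fun _ => σ) = c₁ :=
    approval_eq_of_forall_approved (by simp [hσ₁]; omega)
      (fun c hc => ⟨v₀, by simp [eq_c₀_of_lt c hc, hσ₀]; omega⟩)
  have manipulated_j : approval m n j (Function.update (fun _ => σ) v₀ τ) = c₁ := by
    refine approval_eq_of_forall_approved (fun v => ?_) (fun c hc => ⟨v₀, ?_⟩)
    · by_cases hv : v = v₀ <;> simp [hv, hσ₁, hτ₁] <;> omega
    · simp [eq_c₀_of_lt c hc, hτ₀]
  refine ⟨fun _ => σ, ⟨v₀, τ, ?_⟩, not_manipulable_of_forall_le fun v c => ?_⟩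
  · simp [manipulated_j, honest_j, hσ₀, hσ₁, Fin.lt_def]; omega
  · simp [honest_i, hσ₁]
end

section
/- Let f be a scoring rule with a non-increasing score vector s_1 ≥ s_2 ≥ … ≥ s_m and lexicographic tie-breaking, let P be a profile, let w = f(P), and fix a voter i. Call the candidates c with c ≻_i w the good candidates g_1,…,g_q and the remaining candidates (including w) the bad candidates b_1,…,b_r, where each group is ordered from highest to lowest total score in P_{-i}, candidates with equal scores being ordered by their priority in the tie-breaking order. Let P_i* be the preference g_1 ≻ … ≻ g_q ≻ b_r ≻ … ≻ b_1. Then: if there exists a preference P_i' with f(P_i',P_{-i}) ≻_i w, then also f(P_i*,P_{-i}) ≻_i w. -/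
/-!
Suppose voter `i` obtains a good winner `x` with some vote `Q`, while `σ` elects a bad candidate
`b`. Compare candidates by their total score and then by tie-breaking priority. The good candidate
`c` that `σ` places at position `min (σ x) (Q x)` is ranked by `σ` at least as high as `x` by `Q`,
and, being above `x` in the good block of `σ`, is at least as strong as `x` in `P₋ᵢ`; hence under `σ`
it does at least as well as `x` does under `Q`. Dually, pigeonhole gives a candidate `c'` placed by
`σ` no higher than `b` but by `Q` no lower than `σ b`; it is bad and at least as strong as `b` in
`P₋ᵢ`, so under `Q` it does at least as well as `b` under `σ`. Together with the optimality of both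
winners this closes a cycle `x ≤ c ≤ b ≤ c' ≤ x` of (score, priority) pairs, forcing `x = c'`,
which is good and bad at once.
-/

open Finset OrderDual

theorem Function.Injective.exists_le_and_apply_le {α : Type*} [LinearOrder α]
    [LocallyFiniteOrderTop α] {f : α → α} (hf : f.Injective) (p : α) :
    ∃ r, p ≤ r ∧ f r ≤ p := by
  by_contra! h
  have hcard : #(Ici p) ≤ #(Ioi p) :=
    card_le_card_of_injOn f (fun r hr => by simpa using h r (by simpa using hr)) hf.injOn
  rw [card_Ioi_eq_card_Ici_sub_one] at hcard
  have : 0 < #(Ici p) := card_pos.2 nonempty_Ici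
  omega

theorem Prod.Lex.toLex_add_le_toLex_add {M α : Type*} [AddCommMonoid M] [LinearOrder M]
    [IsOrderedCancelAddMonoid M] [Preorder α] {a b x y : M} {u v : α} (hab : a ≤ b)
    (h : toLex (x, u) ≤ toLex (y, v)) : toLex (a + x, u) ≤ toLex (b + y, v) := by
  rw [Prod.Lex.toLex_le_toLex] at h ⊢
  rcases h with hxy | ⟨rfl, huv⟩
  · exact Or.inl (add_lt_add_of_le_of_lt hab hxy)
  · rcases hab.lt_or_eq with hab | rfl
    · exact Or.inl (add_lt_add_of_lt_of_le hab le_rfl)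
    · exact Or.inr ⟨rfl, huv⟩

section Voting

variable {m n : ℕ}

def lexKey (t : Fin m → ℕ) (c : Fin m) : ℕ ×ₗ (Fin m)ᵒᵈ := toLex (t c, toDual c)

theorem lexKey_injective (t : Fin m → ℕ) : Function.Injective (lexKey t) :=
  fun _ _ h => toDual.injective (congrArg (fun k => (ofLex k).2) h)

theorem lexKey_lt_lexKey_iff {t : Fin m → ℕ} {c d : Fin m} :
    lexKey t c < lexKey t d ↔ t c < t d ∨ t c = t d ∧ d < c := by
  simp [lexKey, Prod.Lex.toLex_lt_toLex]

theorem lexKey_le_lexKey_winner [NeZero m] (s : Fin m → ℕ) (R : Fin n → Pref m) (d : Fin m) :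
    lexKey (score s R) d ≤ lexKey (score s R) (winner s R) := by
  have hmax : ∀ d, score s R d ≤ score s R (winner s R) := by
    unfold winner
    exact (mem_filter.1 (min'_mem (univ.filter fun c => ∀ d, score s R d ≤ score s R c) _)).2
  rw [lexKey, lexKey, Prod.Lex.toLex_le_toLex]
  rcases (hmax d).lt_or_eq with hlt | heq
  · exact Or.inl hlt
  · refine Or.inr ⟨heq, toDual_le_toDual.2 (min'_le _ _ (mem_filter.2 ⟨mem_univ d, ?_⟩))⟩
    exact fun e => heq ▸ hmax e

def othersScore (s : Fin m → ℕ) (P : Fin n → Pref m) (i : Fin n) (c : Fin m) : ℕ :=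
  ∑ v ∈ univ.erase i, s (P v c)

theorem score_update (s : Fin m → ℕ) (P : Fin n → Pref m) (i : Fin n) (τ : Pref m) (c : Fin m) :
    score s (Function.update P i τ) c = s (τ c) + othersScore s P i c := by
  rw [score, ← add_sum_erase _ _ (mem_univ i), Function.update_self, othersScore]
  congr 1
  exact sum_congr rfl fun v hv => by rw [Function.update_of_ne (ne_of_mem_erase hv)]

theorem lexKey_score_update_le {s : Fin m → ℕ} {P : Fin n → Pref m} {i : Fin n}
    {τ τ' : Pref m} {c d : Fin m} (hs : s (τ c) ≤ s (τ' d))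
    (h : lexKey (othersScore s P i) c ≤ lexKey (othersScore s P i) d) :
    lexKey (score s (Function.update P i τ)) c ≤ lexKey (score s (Function.update P i τ')) d := by
  simp only [lexKey, score_update] at h ⊢
  exact Prod.Lex.toLex_add_le_toLex_add hs h

end Voting

theorem stmt_8_general (m n : ℕ) [NeZero m] (s : Fin m → ℕ)
    (hs : ∀ r r' : Fin m, r ≤ r' → s r' ≤ s r)
    (P : Fin n → Pref m) (i : Fin n)
    (w : Fin m)
    (σ : Pref m)
    -- every good candidate is ranked above every bad candidate in `σ`
    (h1 : ∀ c d : Fin m, P i c < P i w → ¬ (P i d < P i w) → σ c < σ d)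
    -- good candidates are ordered from highest to lowest score in `P₋ᵢ`,
    -- candidates of equal score being ordered by their tie-breaking priority
    (h2 : ∀ c d : Fin m, P i c < P i w → P i d < P i w →
      (σ c < σ d ↔
        (∑ v ∈ Finset.univ.erase i, s (P v d)) < (∑ v ∈ Finset.univ.erase i, s (P v c)) ∨
        ((∑ v ∈ Finset.univ.erase i, s (P v c)) = (∑ v ∈ Finset.univ.erase i, s (P v d)) ∧
          c < d)))
    -- bad candidates are ordered from lowest to highest score in `P₋ᵢ`,
    -- candidates of equal score being ordered by reverse tie-breaking priority
    (h3 : ∀ c d : Fin m, ¬ (P i c < P i w) → ¬ (P i d < P i w) →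
      (σ c < σ d ↔
        (∑ v ∈ Finset.univ.erase i, s (P v c)) < (∑ v ∈ Finset.univ.erase i, s (P v d)) ∨
        ((∑ v ∈ Finset.univ.erase i, s (P v c)) = (∑ v ∈ Finset.univ.erase i, s (P v d)) ∧
          d < c)))
    (hman : ∃ Q : Pref m, P i (winner s (Function.update P i Q)) < P i w) :
    P i (winner s (Function.update P i σ)) < P i w := by
  set K := lexKey (othersScore s P i)
  obtain ⟨Q, hx⟩ := hman
  set x := winner s (Function.update P i Q)
  by_contra hb
  set b := winner s (Function.update P i σ)
  set c := σ.symm (min (σ x) (Q x))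
  have hσc : σ c = min (σ x) (Q x) := σ.apply_symm_apply _
  have hc : P i c < P i w := by
    by_contra hc
    exact (h1 x c hx hc).not_ge (hσc ▸ min_le_left _ _)
  have hxc : K x ≤ K c := not_lt.1 fun h =>
    have h' := (lexKey_lt_lexKey_iff.1 h).imp_right (And.imp_left Eq.symm)
    ((h2 x c hx hc).2 h').not_ge (hσc ▸ min_le_left _ _)
  obtain ⟨r, hbr, hr⟩ := (σ.symm.trans Q).injective.exists_le_and_apply_le (σ b)
  set c' := σ.symm r
  have hσc' : σ c' = r := σ.apply_symm_apply r
  have hc' : ¬ P i c' < P i w := fun h => (h1 c' b h hb).not_ge (hσc' ▸ hbr)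
  have hbc' : K b ≤ K c' := not_lt.1 fun h =>
    ((h3 c' b hc' hb).2 (lexKey_lt_lexKey_iff.1 h)).not_ge (hσc' ▸ hbr)
  have hxc' : x = c' := by
    refine lexKey_injective _ (le_antisymm ?_ (lexKey_le_lexKey_winner _ _ c'))
    calc lexKey _ c' ≥ lexKey _ b := lexKey_score_update_le (hs _ _ hr) hbc'
      _ ≥ lexKey _ c := lexKey_le_lexKey_winner _ _ c
      _ ≥ lexKey _ x := lexKey_score_update_le (hs _ _ (hσc ▸ min_le_right _ _)) hxc
  exact hc' (hxc' ▸ hx)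

/-- The normal-form manipulation lemma: for a scoring rule with non-increasing score vector,
if voter `i` can manipulate at `P`, then voter `i` can manipulate with the vote `σ` that ranks
the good candidates first (from highest to lowest score in `P₋ᵢ`, ties resolved by tie-breaking
priority) followed by the bad candidates (from lowest to highest score in `P₋ᵢ`, ties resolved by
reverse tie-breaking priority). Here a candidate `c` is good when `c ≻ᵢ w` for the sincere
winner `w`, and bad otherwise. -/
theorem stmt_8 (m n : ℕ) [NeZero m] (s : Fin m → ℕ)
    (hs : ∀ r r' : Fin m, r ≤ r' → s r' ≤ s r)
    (P : Fin n → Pref m) (i : Fin n)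
    (w : Fin m) (hw : w = winner s P)
    (σ : Pref m)
    -- every good candidate is ranked above every bad candidate in `σ`
    (h1 : ∀ c d : Fin m, P i c < P i w → ¬ (P i d < P i w) → σ c < σ d)
    -- good candidates are ordered from highest to lowest score in `P₋ᵢ`,
    -- candidates of equal score being ordered by their tie-breaking priority
    (h2 : ∀ c d : Fin m, P i c < P i w → P i d < P i w →
      (σ c < σ d ↔
        (∑ v ∈ Finset.univ.erase i, s (P v d)) < (∑ v ∈ Finset.univ.erase i, s (P v c)) ∨
        ((∑ v ∈ Finset.univ.erase i, s (P v c)) = (∑ v ∈ Finset.univ.erase i, s (P v d)) ∧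
          c < d)))
    -- bad candidates are ordered from lowest to highest score in `P₋ᵢ`,
    -- candidates of equal score being ordered by reverse tie-breaking priority
    (h3 : ∀ c d : Fin m, ¬ (P i c < P i w) → ¬ (P i d < P i w) →
      (σ c < σ d ↔
        (∑ v ∈ Finset.univ.erase i, s (P v c)) < (∑ v ∈ Finset.univ.erase i, s (P v d)) ∨
        ((∑ v ∈ Finset.univ.erase i, s (P v c)) = (∑ v ∈ Finset.univ.erase i, s (P v d)) ∧
          d < c)))
    (hman : ∃ Q : Pref m, P i (winner s (Function.update P i Q)) < P i w) :
    P i (winner s (Function.update P i σ)) < P i w :=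
  stmt_8_general m n s hs P i w σ h1 h2 h3 hman
end

section
/- Let 1 ≤ i < j ≤ m−1 and let n = 2q+1 be odd with q ≥ 1. Then β_i ≱_PS β_j; that is, there exists a profile of n preferences over m candidates at which the j-Borda rule β_j is manipulable but the i-Borda rule β_i is not manipulable. -/
/-!
Take `q` voters ranking `0 ≻ 1 ≻ 2 ≻ ⋯`, `q` voters ranking `1 ≻ 0` followed by the other
candidates in reverse order, and one voter ranking `1` first and `0` in position `i`. Under a
`k`-Borda rule with `k < m`, each pair of opposite voters gives `0` and `1` the same score and any
other candidate at most `k - 2` points, so `1` wins, ahead of `0` by `min k i` points. A voter of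
the first kind who moves `1` to the bottom costs it `k - 1` points. For `k = j` this lets `0` win,
because `0` wins ties against `1` and the candidate who takes over the second place stays behind.
For `k = i` it does not, and no other voter prefers any candidate to `1`.
-/

open Finset Function Equiv

section ScoringRule

variable {m n : ℕ} (s : Fin m → ℕ)

theorem score_update_add (P : Fin n → Pref m) (v : Fin n) (Q : Pref m) (c : Fin m) :
    score s (update P v Q) c + s (P v c) = score s P c + s (Q c) := by
  have hsum : score s (update P v Q) c = s (Q c) + ∑ w ∈ univ \ {v}, s (P w c) := by
    simp only [score, apply_update (fun _ (σ : Pref m) => s (σ c)), sum_update_of_mem (mem_univ v)]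
  rw [hsum, score, ← add_sum_erase _ _ (mem_univ v), sdiff_singleton_eq_erase]
  ring

variable [NeZero m]

theorem winner_eq_iff {P : Fin n → Pref m} {w : Fin m} :
    winner s P = w ↔
      (∀ c, score s P c ≤ score s P w) ∧ ∀ c < w, score s P c < score s P w := by
  have hmem : ∀ c, c ∈ univ.filter (fun c => ∀ d, score s P d ≤ score s P c) ↔
      ∀ d, score s P d ≤ score s P c := by simp
  constructor
  · rintro rfl
    have hmax : ∀ d, score s P d ≤ score s P (winner s P) := (hmem _).1 (min'_mem _ _)
    refine ⟨hmax, fun c hc => lt_of_not_ge fun hle => hc.not_ge (min'_le _ _ ?_)⟩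
    exact (hmem c).2 fun d => (hmax d).trans hle
  · rintro ⟨hmax, hlt⟩
    refine le_antisymm (min'_le _ _ ((hmem w).2 hmax)) (le_min' _ _ _ fun c hc => ?_)
    exact le_of_not_gt fun hcw => (hlt c hcw).not_ge (((hmem c).1 hc) w)

theorem winner_eq_zero {P : Fin n → Pref m} (h : ∀ c, score s P c ≤ score s P 0) :
    winner s P = 0 :=
  (winner_eq_iff s).2 ⟨h, fun c hc => absurd hc (Fin.not_lt_zero c)⟩

/-- A voter who does not rank `w` first can only profit by making `r` win; by changing the ballot
they lower `w` by at most `s 1` and cannot raise `r`. -/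
theorem not_manipulable_winner (hs : Antitone s) {P : Fin n → Pref m} {w r : Fin m}
    (hw : winner s P = w) (hvoters : ∀ v, P v w = 0 ∨ P v r = 0 ∧ P v w = 1)
    (hgap : score s P r + s 1 < score s P w) :
    ¬ Manipulable (winner s) P := by
  rintro ⟨v, Q, hlt⟩
  rw [hw] at hlt
  obtain ⟨hr, hw1⟩ : P v r = 0 ∧ P v w = 1 :=
    (hvoters v).resolve_left fun h => Fin.not_lt_zero _ (h ▸ hlt)
  have hwin : winner s (update P v Q) = r := by
    refine (P v).injective (le_antisymm ?_ (hr ▸ Fin.zero_le _))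
    have := Fin.lt_def.1 (hw1 ▸ hlt)
    rw [Fin.val_one'] at this
    exact Fin.le_def.2 (by rw [hr, Fin.val_zero]; have := Nat.mod_le 1 m; omega)
  have hr' := score_update_add s P v Q r
  have hw' := score_update_add s P v Q w
  rw [hr] at hr'
  rw [hw1] at hw'
  have hQr : s (Q r) ≤ s 0 := hs (Fin.zero_le _)
  have := ((winner_eq_iff s).1 hwin).1 w
  omega

end ScoringRule

section BlockProfile

variable {m : ℕ}

def blockProfile (q : ℕ) (A X B : Pref m) : Fin (2 * q + 1) → Pref m :=
  fun v => if (v : ℕ) < q then A else if (v : ℕ) = q then X else B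

theorem score_blockProfile (s : Fin m → ℕ) (q : ℕ) (A X B : Pref m) (c : Fin m) :
    score s (blockProfile q A X B) c = q * (s (A c) + s (B c)) + s (X c) := by
  let f : ℕ → ℕ := fun v => s ((if v < q then A else if v = q then X else B) c)
  have hA : ∑ v ∈ range q, f v = q * s (A c) := by
    rw [sum_congr rfl fun v hv => by simp only [f]; rw [if_pos (mem_range.1 hv)], sum_const,
      card_range, smul_eq_mul]
  have hB : ∑ v ∈ range q, f (q + (v + 1)) = q * s (B c) := by
    rw [sum_congr rfl fun v _ => by simp only [f]; rw [if_neg (by omega), if_neg (by omega)],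
      sum_const, card_range, smul_eq_mul]
  have hX : f (q + 0) = s (X c) := by simp [f]
  change ∑ v : Fin (2 * q + 1), f v = _
  rw [Fin.sum_univ_eq_sum_range f, show 2 * q + 1 = q + (q + 1) by ring, sum_range_add,
    sum_range_succ', hA, hB, hX]
  ring

end BlockProfile

theorem val_swap_apply {k : ℕ} (x y c : Fin k) :
    (swap x y c : ℕ) = if (c : ℕ) = x then (y : ℕ) else if (c : ℕ) = y then (x : ℕ) else c := by
  simp only [swap_apply_def, Fin.ext_iff, apply_ite Fin.val]

section SeparatingProfile

variable {m q : ℕ}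

/-- Position of candidate `c` in the ranking `1 ≻ 0 ≻ m+1 ≻ m ≻ ⋯ ≻ 2`. -/
def revTail (c : Fin (m + 2)) : Fin (m + 2) :=
  ⟨if (c : ℕ) ≤ 1 then 1 - c else m + 3 - c, by split_ifs <;> omega⟩

theorem revTail_involutive : Involutive (revTail (m := m)) := fun c =>
  Fin.ext (by simp only [revTail]; split_ifs <;> omega)

@[simp] theorem revTail_zero : revTail (0 : Fin (m + 2)) = 1 := rfl

@[simp] theorem revTail_one : revTail (1 : Fin (m + 2)) = 0 := rfl

theorem sub_add_sub_revTail_le (k : ℕ) (c : Fin (m + 2)) :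
    (k - c) + (k - revTail c) ≤ 2 * k - 1 := by
  simp only [revTail]
  split_ifs <;> omega

theorem sub_add_sub_revTail_le_of_two_le {k : ℕ} (hk : k ≤ m + 1) {c : Fin (m + 2)}
    (hc : 2 ≤ (c : ℕ)) : (k - c) + (k - revTail c) ≤ k - 2 := by
  simp only [revTail]
  split_ifs <;> omega

/-- `q` voters rank `0 ≻ 1 ≻ 2 ≻ ⋯`, `q` voters rank `1 ≻ 0 ≻ m+1 ≻ m ≻ ⋯ ≻ 2`, and one voter
ranks `1` first, `0` in position `a`, and `a` in position `1`. -/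
def separatingProfile (q : ℕ) (a : Fin (m + 2)) : Fin (2 * q + 1) → Pref (m + 2) :=
  blockProfile q (Equiv.refl _) ((swap 0 1).trans (swap 1 a)) revTail_involutive.toPerm

variable {a : Fin (m + 2)}

theorem score_separatingProfile (k : ℕ) (c : Fin (m + 2)) :
    score (fun r => k - r) (separatingProfile q a) c =
      q * ((k - c) + (k - revTail c)) + (k - swap 1 a (swap 0 1 c)) :=
  score_blockProfile _ _ _ _ _ _

theorem score_separatingProfile_zero (k : ℕ) :
    score (fun r => k - r) (separatingProfile q a) 0 = q * (2 * k - 1) + (k - a) := by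
  rw [score_separatingProfile, revTail_zero, swap_apply_left, swap_apply_left]
  simp only [Fin.val_zero, Fin.val_one]
  congr 2
  omega

theorem score_separatingProfile_one (k : ℕ) (ha : a ≠ 0) :
    score (fun r => k - r) (separatingProfile q a) 1 = q * (2 * k - 1) + k := by
  rw [score_separatingProfile, revTail_one, swap_apply_right,
    swap_apply_of_ne_of_ne zero_ne_one ha.symm]
  simp only [Fin.val_zero, Fin.val_one]
  congr 2
  omega

theorem kBorda_separatingProfile {k : ℕ} (hk : 1 ≤ k) (ha : a ≠ 0) :
    kBorda (m + 2) (2 * q + 1) k (separatingProfile q a) = 1 := by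
  refine (winner_eq_iff _).2 ⟨fun c => ?_, fun c hc => ?_⟩
  · rw [score_separatingProfile_one k ha, score_separatingProfile]
    exact add_le_add (Nat.mul_le_mul_left q (sub_add_sub_revTail_le k c)) (Nat.sub_le _ _)
  · obtain rfl : c = 0 := Fin.ext (by have := Fin.lt_def.1 hc; simp at this; omega)
    rw [score_separatingProfile_one k ha, score_separatingProfile_zero]
    have : (a : ℕ) ≠ 0 := Fin.val_ne_zero_iff.2 ha
    omega

theorem not_manipulable_kBorda_separatingProfile {i : ℕ} (hi : 1 ≤ i) (hia : i ≤ a) :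
    ¬ Manipulable (kBorda (m + 2) (2 * q + 1) i) (separatingProfile q a) := by
  have ha : a ≠ 0 := fun h => by simp [h] at hia; omega
  refine not_manipulable_winner _ (r := 0) (fun _ _ h => Nat.sub_le_sub_left h i)
    (kBorda_separatingProfile hi ha) (fun v => ?_) ?_
  · simp only [separatingProfile, blockProfile]
    split_ifs
    · exact Or.inr ⟨rfl, rfl⟩
    · exact Or.inl (by simp [swap_apply_of_ne_of_ne zero_ne_one ha.symm])
    · exact Or.inl (by simp)
  · rw [score_separatingProfile_one i ha, score_separatingProfile_zero]
    simp only [Fin.val_one]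
    omega

theorem sub_swap_add_sub_swap_le {j : ℕ} (ha : (a : ℕ) ≤ m) {c : Fin (m + 2)}
    (hc : 2 ≤ (c : ℕ)) :
    (j - swap 1 a (swap 0 1 c)) + (j - swap 1 (Fin.last _) c) ≤ (j - 1) + (j - c) := by
  have hc0 : c ≠ 0 := fun h => by simp [h] at hc
  have hc1 : c ≠ 1 := fun h => by simp [h] at hc
  rw [swap_apply_of_ne_of_ne hc0 hc1, val_swap_apply, val_swap_apply]
  split_ifs <;> simp only [Fin.val_one, Fin.val_last] at * <;> omega

theorem separatingProfile_zero (hq : 1 ≤ q) : separatingProfile q a 0 = Equiv.refl _ :=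
  if_pos hq

theorem kBorda_update_separatingProfile {j : ℕ} (hq : 1 ≤ q) (ha : a ≠ 0)
    (haj : (a : ℕ) < j) (hj : j ≤ m + 1) :
    kBorda (m + 2) (2 * q + 1) j (update (separatingProfile q a) 0 (swap 1 (Fin.last _))) = 0 := by
  have ha1 : (a : ℕ) ≠ 0 := Fin.val_ne_zero_iff.2 ha
  have hscore (c : Fin (m + 2)) :=
    score_update_add (fun r => j - r) (separatingProfile q a) 0 (swap 1 (Fin.last _)) c
  simp only [separatingProfile_zero hq, Equiv.refl_apply] at hscore
  have h0 := hscore 0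
  rw [swap_apply_of_ne_of_ne (x := 0) (by simp) (by simp [Fin.ext_iff]),
    score_separatingProfile_zero] at h0
  refine winner_eq_zero _ fun c => ?_
  obtain hc | hc | hc : (c : ℕ) = 0 ∨ (c : ℕ) = 1 ∨ 2 ≤ (c : ℕ) := by omega
  · obtain rfl : c = 0 := Fin.ext (by simp [hc])
    exact le_rfl
  · obtain rfl : c = 1 := Fin.ext hc
    have h1 := hscore 1
    rw [swap_apply_left, score_separatingProfile_one j ha] at h1
    simp only [Fin.val_one, Fin.val_last] at h1
    omega
  · have h := hscore c
    rw [score_separatingProfile] at h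
    have hpair := Nat.mul_le_mul_left q (sub_add_sub_revTail_le_of_two_le hj hc)
    have hsingle := sub_swap_add_sub_swap_le (a := a) (j := j) (by omega) hc
    have hq' : q * (j - 2) + (j + 1) ≤ q * (2 * j - 1) := by
      rw [show 2 * j - 1 = (j - 2) + (j + 1) by omega, mul_add]
      exact Nat.add_le_add_left (Nat.le_mul_of_pos_left _ hq) _
    omega

theorem manipulable_kBorda_separatingProfile {j : ℕ} (hq : 1 ≤ q) (ha : a ≠ 0)
    (haj : (a : ℕ) < j) (hj : j ≤ m + 1) :
    Manipulable (kBorda (m + 2) (2 * q + 1) j) (separatingProfile q a) := by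
  refine ⟨0, swap 1 (Fin.last _), ?_⟩
  rw [kBorda_update_separatingProfile hq ha haj hj, kBorda_separatingProfile (by omega) ha,
    separatingProfile_zero hq]
  exact zero_lt_one

end SeparatingProfile

/-- For `1 ≤ i < j ≤ m-1` and `n = 2q+1` odd with `q ≥ 1`: `β_i ≱_PS β_j`. -/
theorem stmt_10 (m n q i j : ℕ) [NeZero m] (hi : 1 ≤ i) (hij : i < j) (hj : j ≤ m - 1)
    (hq : 1 ≤ q) (hn : n = 2 * q + 1) :
    ∃ P : Fin n → Pref m,
      Manipulable (kBorda m n j) P ∧ ¬ Manipulable (kBorda m n i) P := by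
  obtain ⟨m, rfl⟩ : ∃ m', m = m' + 2 := ⟨m - 2, by omega⟩
  subst hn
  let a : Fin (m + 2) := ⟨i, by omega⟩
  have ha : a ≠ 0 := Fin.val_ne_zero_iff.1 (by simp only [a]; omega)
  exact ⟨separatingProfile q a, manipulable_kBorda_separatingProfile hq ha hij (by omega),
    not_manipulable_kBorda_separatingProfile hi le_rfl⟩
end

section
/- Let n = 2 and let k ≥ 1 with m > k+2. Then β_{k+1} ≥_PS β_k; that is, every profile of 2 preferences over m candidates at which the k-Borda rule β_k is manipulable is also a profile at which the (k+1)-Borda rule β_{k+1} is manipulable. -/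
/-!
Let `W` be the `β_{k+1}` winner and suppose `β_{k+1}` is not manipulable at `P`. If voter `v`
prefers some `c` to `W`, then `v` cannot make `c` win by ranking `c` first and the others roughly
in the reverse of the other voter `u`'s order. Since `m > k + 2`, that ballot gives every `d ≠ c`
at most `k + 1` points, with equality only for `u`'s top choice, so `c` must get no point from `u`
and must lose the tie-break to `u`'s top choice. Applied to the two top choices, this shows that
`W` is some voter's top choice, and then that `β_k` elects `W` as well. But whatever `v` reports,
the `β_k` winner either gets a point from `u` or does not come after `u`'s top choice, so `v`
cannot force a candidate preferred to `W`.
-/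

open Finset

section Winner

variable {m n : ℕ} [NeZero m] (s : Fin m → ℕ) (P : Fin n → Pref m)

lemma score_le_score_winner (d : Fin m) : score s P d ≤ score s P (winner s P) := by
  have h : winner s P ∈ univ.filter fun c => ∀ d, score s P d ≤ score s P c := min'_mem _ _
  exact (mem_filter.mp h).2 d

lemma winner_le_of_forall_score_le {c : Fin m} (hc : ∀ d, score s P d ≤ score s P c) :
    winner s P ≤ c :=
  min'_le _ _ (mem_filter.mpr ⟨mem_univ _, hc⟩)

lemma winner_eq_of_forall_ne {c : Fin m}
    (hc : ∀ d ≠ c, score s P d < score s P c ∨ score s P d = score s P c ∧ c < d) :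
    winner s P = c := by
  have hmax : ∀ d, score s P d ≤ score s P c := fun d => by
    rcases eq_or_ne d c with rfl | hd
    · rfl
    · rcases hc d hd with h | h
      exacts [h.le, h.1.le]
  refine le_antisymm (winner_le_of_forall_score_le s P hmax) (not_lt.mp fun hlt => ?_)
  rcases hc _ hlt.ne with h | h
  · exact (score_le_score_winner s P c).not_gt h
  · exact h.2.not_gt hlt

end Winner

lemma score_eq_add_of_ne {m : ℕ} (s : Fin m → ℕ) (P : Fin 2 → Pref m) (c : Fin m)
    {u v : Fin 2} (huv : u ≠ v) : score s P c = s (P v c) + s (P u c) := by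
  fin_cases u <;> fin_cases v <;> simp_all [score, Fin.sum_univ_two, add_comm]

/-- The reverse of `q`, with `c` swapped to the top. -/
lemma exists_pref_eq_zero_and_le_add {m : ℕ} [NeZero m] (q : Pref m) (c : Fin m) :
    ∃ Q : Pref m, Q c = 0 ∧ ∀ d ≠ c, m - 1 ≤ (Q d : ℕ) + q d := by
  refine ⟨q.trans (Fin.revPerm.trans (Equiv.swap (Fin.rev (q c)) 0)), by simp, fun d hd => ?_⟩
  have hne : Fin.rev (q d) ≠ Fin.rev (q c) := Fin.rev_injective.ne (q.injective.ne hd)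
  simp only [Equiv.trans_apply, Fin.revPerm_apply]
  rcases eq_or_ne (Fin.rev (q d)) 0 with h | h
  · have hd : (q d : ℕ) = m - 1 := by
      have := congrArg Fin.val h
      simp only [Fin.val_rev, Fin.val_zero] at this
      omega
    rw [h, Equiv.swap_apply_right]
    omega
  · rw [Equiv.swap_apply_of_ne_of_ne hne h, Fin.val_rev]
    omega

section TwoVoters

variable {m : ℕ} [NeZero m]

lemma exists_update_kBorda_succ_eq {k : ℕ} (hm : k + 2 < m) (P : Fin 2 → Pref m)
    {u v : Fin 2} (huv : u ≠ v) {c : Fin m} (hc : (P u c : ℕ) ≤ k ∨ c ≤ (P u).symm 0) :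
    ∃ Q, kBorda m 2 (k + 1) (Function.update P v Q) = c := by
  obtain ⟨Q, hQc, hQ⟩ := exists_pref_eq_zero_and_le_add (P u) c
  refine ⟨Q, winner_eq_of_forall_ne _ _ fun d hd => ?_⟩
  have hQd : (Q d : ℕ) ≠ 0 := Fin.val_ne_of_ne (hQc ▸ Q.injective.ne hd)
  have hsum := hQ d hd
  simp only [score_eq_add_of_ne _ _ _ huv, Function.update_self, Function.update_of_ne huv, hQc,
    Fin.val_zero]
  by_cases hck : (P u c : ℕ) ≤ k
  · exact Or.inl (by omega)
  have hc : c < (P u).symm 0 :=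
    (hc.resolve_left hck).lt_of_ne (by rintro rfl; simp at hck)
  rcases eq_or_ne d ((P u).symm 0) with rfl | hdu
  · right
    refine ⟨?_, hc⟩
    simp only [Equiv.apply_symm_apply, Fin.val_zero] at hsum ⊢
    omega
  · have : (P u d : ℕ) ≠ 0 := fun h0 => hdu ((Equiv.eq_symm_apply _).mpr (Fin.ext h0))
    exact Or.inl (by omega)

lemma kBorda_lt_or_le_symm_zero (k : ℕ) (R : Fin 2 → Pref m) {u v : Fin 2} (huv : u ≠ v) :
    (R u (kBorda m 2 k R) : ℕ) < k ∨ kBorda m 2 k R ≤ (R u).symm 0 := by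
  unfold kBorda
  refine or_iff_not_imp_left.mpr fun hw => winner_le_of_forall_score_le _ _ fun d => ?_
  have := score_le_score_winner (fun r : Fin m => k - (r : ℕ)) R d
  simp only [score_eq_add_of_ne _ _ _ huv, Equiv.apply_symm_apply, Fin.val_zero] at this ⊢
  omega

lemma lt_and_lt_of_not_manipulable_kBorda_succ {k : ℕ} (hm : k + 2 < m) {P : Fin 2 → Pref m}
    (h : ¬ Manipulable (kBorda m 2 (k + 1)) P) {u v : Fin 2} (huv : u ≠ v) {c : Fin m}
    (hc : P v c < P v (kBorda m 2 (k + 1) P)) : k < P u c ∧ (P u).symm 0 < c := by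
  by_contra hcon
  rw [not_and_or, not_lt, not_lt] at hcon
  obtain ⟨Q, hQ⟩ := exists_update_kBorda_succ_eq hm P huv hcon
  exact h ⟨v, Q, hQ ▸ hc⟩

lemma exists_kBorda_succ_eq_symm_zero {k : ℕ} (hm : k + 2 < m) {P : Fin 2 → Pref m}
    (h : ¬ Manipulable (kBorda m 2 (k + 1)) P) : ∃ v, kBorda m 2 (k + 1) P = (P v).symm 0 := by
  by_contra! hne
  have top_lt : ∀ {u v : Fin 2}, u ≠ v → (P u).symm 0 < (P v).symm 0 := fun huv =>
    (lt_and_lt_of_not_manipulable_kBorda_succ hm h huv (by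
      simpa [Fin.pos_iff_ne_zero, ← Equiv.eq_symm_apply] using hne _)).2
  exact (top_lt (u := 0) (v := 1) (by decide)).asymm (top_lt (by decide))

lemma kBorda_eq_symm_zero {k : ℕ} (hk : 1 ≤ k) {P : Fin 2 → Pref m} {u v : Fin 2}
    (huv : u ≠ v)
    (h : ∀ c, P u c < P u ((P v).symm 0) → k < P v c ∧ (P v).symm 0 < c) :
    kBorda m 2 k P = (P v).symm 0 := by
  refine winner_eq_of_forall_ne _ _ fun d hd => ?_
  have hvd : (P v d : ℕ) ≠ 0 := fun h0 => hd ((Equiv.eq_symm_apply _).mpr (Fin.ext h0))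
  simp only [score_eq_add_of_ne _ _ _ huv, Equiv.apply_symm_apply, Fin.val_zero]
  rcases lt_or_gt_of_ne ((P u).injective.ne hd) with hlt | hgt
  · obtain ⟨hkv, htop⟩ := h d hlt
    exact (lt_or_eq_of_le (by omega)).imp_right fun heq => ⟨heq, htop⟩
  · left
    have : (P u ((P v).symm 0) : ℕ) < P u d := hgt
    omega

end TwoVoters

/-- For `n = 2`, `k ≥ 1`, `m > k+2`: `β_{k+1} ≥_PS β_k`. -/
theorem stmt_17 (m k : ℕ) [NeZero m] (hk : 1 ≤ k) (hm : k + 2 < m) :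
    MoreManip (kBorda m 2 (k + 1)) (kBorda m 2 k) := by
  rintro P ⟨v, Q, hQ⟩
  by_contra h
  have hstable {a b : Fin 2} (hab : a ≠ b) {c : Fin m} :=
    lt_and_lt_of_not_manipulable_kBorda_succ hm h hab (c := c)
  obtain ⟨w, hw⟩ := exists_kBorda_succ_eq_symm_zero hm h
  obtain ⟨u, huw⟩ := exists_ne w
  have hβ : kBorda m 2 k P = kBorda m 2 (k + 1) P := by
    rw [hw]
    exact kBorda_eq_symm_zero hk huw fun c hc => hstable huw.symm (hw ▸ hc)
  obtain ⟨u, huv⟩ := exists_ne v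
  obtain ⟨hpts, htop⟩ := hstable huv (hβ ▸ hQ)
  have hsincere := kBorda_lt_or_le_symm_zero k (Function.update P v Q) huv
  rw [Function.update_of_ne huv] at hsincere
  rcases hsincere with h' | h'
  · exact hpts.not_gt h'
  · exact htop.not_ge h'
end
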